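/- arXiv:2012.02222 — 3 statements merged into one kernel-verified Lean document; each statement's English description precedes it below -/
import Mathlib

section
/- For any matrix X ∈ Matrix n n ℂ and any finite family of pairwise orthogonal projections Π⁽ᵏ⁾ (i.e. each Π⁽ᵏ⁾ is self-adjoint idempotent and Π⁽ʲ⁾Π⁽ᵏ⁾ = 0 for j ≠ k, with Σₖ Π⁽ᵏ⁾ ≤ 1), the pinching inequality holds for the trace norm: ‖Σₖ Π⁽ᵏ⁾ X Π⁽ᵏ⁾‖₁ ≤ ‖X‖₁. Moreover, ‖Σₖ Π⁽ᵏ⁾ X Π⁽ᵏ⁾‖₁ = Σₖ ‖Π⁽ᵏ⁾ X Π⁽ᵏ⁾‖₁. -/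
open Matrix
open scoped ComplexOrder Kronecker

/-- The trace norm of a complex square matrix: `Tr √(X Xᴴ)`. -/
noncomputable def traceNorm {n : Type*} [Fintype n] [DecidableEq n]
    (X : Matrix n n ℂ) : ℝ :=
  (((Matrix.posSemidef_self_mul_conjTranspose X).1.eigenvectorUnitary : Matrix n n ℂ) *
    diagonal (((↑) : ℝ → ℂ) ∘ Real.sqrt ∘ (Matrix.posSemidef_self_mul_conjTranspose X).1.eigenvalues) *
    (star (Matrix.posSemidef_self_mul_conjTranspose X).1.eigenvectorUnitary : Matrix n n ℂ)).trace.re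

/-- A density matrix: positive semidefinite with unit trace. -/
def IsDensityMatrix {n : Type*} [Fintype n] [DecidableEq n]
    (ρ : Matrix n n ℂ) : Prop :=
  ρ.PosSemidef ∧ ρ.trace = 1

/-!
Both claims rest on the description of the trace norm as a maximum over contractions:
`Re tr (W X) ≤ ‖X‖₁` whenever `Wᴴ W ≤ 1` (Cauchy–Schwarz on the rows of `X` in an eigenbasis of
`X Xᴴ`), with equality for `W = Xᴴ (X Xᴴ)^{-1/2}`, the inverse taken on the support.
Since `tr (W ∑ Πₖ X Πₖ) = tr ((∑ Πₖ W Πₖ) X)` and pinching a contraction gives a contraction,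
the pinching inequality follows. For the equality, the blocks `Bₖ = Πₖ X Πₖ` satisfy
`Bⱼ Bₖᴴ = Bⱼᴴ Bₖ = 0` for `j ≠ k`, so `∑ₖ √(Bₖ Bₖᴴ)` is the square root of
`(∑ Bₖ) (∑ Bₖ)ᴴ` and the traces add up.
-/

open scoped MatrixOrder

lemma Fintype.sum_mul_sum_of_pairwise {ι R : Type*} [Fintype ι] [NonUnitalNonAssocSemiring R]
    {f g : ι → R} (h : Pairwise fun i j => f i * g j = 0) :
    (∑ i, f i) * ∑ j, g j = ∑ i, f i * g i := by
  rw [Finset.sum_mul_sum]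
  exact Finset.sum_congr rfl fun i _ =>
    Finset.sum_eq_single i (fun j _ hji => h hji.symm) (by simp)

lemma conj_mul_conj_eq_zero_of_mul_eq_zero {R : Type*} [SemigroupWithZero R] {p q : R}
    (h : p * q = 0) (a b : R) : p * a * p * (q * b * q) = 0 := by
  simp only [mul_assoc, ← mul_assoc p q, h, zero_mul, mul_zero]

lemma star_mul_self_sum_conj_le_one {R ι : Type*} [Ring R] [PartialOrder R] [StarRing R]
    [StarOrderedRing R] [Fintype ι] {p : ι → R} (hp : ∀ k, IsStarProjection (p k))
    (horth : Pairwise fun j k => p j * p k = 0) (hle : ∑ k, p k ≤ 1) {a : R}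
    (ha : star a * a ≤ 1) :
    star (∑ k, p k * a * p k) * (∑ k, p k * a * p k) ≤ 1 := by
  have hstar (k : ι) (b : R) : star (p k * b * p k) = p k * star b * p k := by
    rw [star_mul, star_mul, (hp k).isSelfAdjoint.star_eq, mul_assoc]
  have hblock (k : ι) : star (p k * a * p k) * (p k * a * p k) ≤ p k :=
    calc star (p k * a * p k) * (p k * a * p k) = star (a * p k) * p k * (a * p k) := by
          rw [hstar, star_mul, (hp k).isSelfAdjoint.star_eq]
          simp only [mul_assoc]
          rw [← mul_assoc (p k) (p k), (hp k).isIdempotentElem.eq]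
      _ ≤ star (a * p k) * (a * p k) := by
          simpa using star_left_conjugate_le_conjugate (hp k).le_one (a * p k)
      _ = star (p k) * (star a * a) * p k := by simp only [star_mul, mul_assoc]
      _ ≤ star (p k) * 1 * p k := star_left_conjugate_le_conjugate ha (p k)
      _ = p k := by rw [mul_one, (hp k).isSelfAdjoint.star_eq, (hp k).isIdempotentElem.eq]
  rw [star_sum, Fintype.sum_mul_sum_of_pairwise fun j k hjk => by
    dsimp only; rw [hstar]; exact conj_mul_conj_eq_zero_of_mul_eq_zero (horth hjk) _ _]
  exact (Finset.sum_le_sum fun k _ => hblock k).trans hle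

namespace Matrix

section

variable {l m n : Type*} [Fintype m]

lemma re_mul_conjTranspose_apply_self (M : Matrix n m ℂ) (i : n) :
    ((M * Mᴴ) i i).re = ∑ j, ‖M i j‖ ^ 2 := by
  simp [mul_apply, Complex.re_sum, Complex.mul_conj', ← Complex.ofReal_pow]

lemma re_conjTranspose_mul_apply_self (M : Matrix m n ℂ) (j : n) :
    ((Mᴴ * M) j j).re = ∑ i, ‖M i j‖ ^ 2 := by
  simpa using Mᴴ.re_mul_conjTranspose_apply_self j

lemma norm_mul_apply_le (A : Matrix l m ℂ) (B : Matrix m n ℂ) (i : l) (k : n) :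
    ‖(A * B) i k‖ ≤ √(∑ j, ‖A i j‖ ^ 2) * √(∑ j, ‖B j k‖ ^ 2) :=
  calc ‖(A * B) i k‖ ≤ ∑ j, ‖A i j‖ * ‖B j k‖ := by
        simpa only [mul_apply, norm_mul] using norm_sum_le Finset.univ fun j => A i j * B j k
    _ ≤ _ := Real.sum_mul_le_sqrt_mul_sqrt _ _ _

lemma trace_mul_sum_conj {R ι : Type*} [CommSemiring R] [Fintype ι] (W X : Matrix m m R)
    (P : ι → Matrix m m R) :
    (W * ∑ k, P k * X * P k).trace = ((∑ k, P k * W * P k) * X).trace := by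
  rw [Finset.mul_sum, Finset.sum_mul, trace_sum, trace_sum]
  refine Finset.sum_congr rfl fun k _ => ?_
  rw [← Matrix.mul_assoc W, trace_mul_comm]
  simp only [Matrix.mul_assoc]

end

variable {n : Type*} [Fintype n] [DecidableEq n]

lemma sqrt_mul_sqrt_eq_zero {A B : Matrix n n ℂ} (hA : 0 ≤ A) (hB : 0 ≤ B) (h : A * B = 0) :
    CFC.sqrt A * CFC.sqrt B = 0 := by
  rw [← trace_conjTranspose_mul_self_eq_zero_iff, conjTranspose_mul, ← star_eq_conjTranspose,
    ← star_eq_conjTranspose, (CFC.sqrt_nonneg A).isSelfAdjoint.star_eq,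
    (CFC.sqrt_nonneg B).isSelfAdjoint.star_eq, Matrix.mul_assoc, ← Matrix.mul_assoc (CFC.sqrt A),
    CFC.sqrt_mul_sqrt_self A, trace_mul_comm, Matrix.mul_assoc, CFC.sqrt_mul_sqrt_self B, h,
    trace_zero]

/-- As `(√x)⁻¹ = 0` for `x ≤ 0`, the left-hand side is the projection onto the range of `A`. -/
lemma cfc_inv_sqrt_mul_mul_cfc_inv_sqrt_le_one {A : Matrix n n ℂ} (hA : IsSelfAdjoint A) :
    cfc (fun x : ℝ => (√x)⁻¹) A * A * cfc (fun x : ℝ => (√x)⁻¹) A ≤ 1 := by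
  have hcont (f : ℝ → ℝ) : ContinuousOn f (spectrum ℝ A) := A.finite_real_spectrum.continuousOn f
  nth_rw 2 [← cfc_id' ℝ A]
  rw [← cfc_mul _ _ A (hcont _) (hcont _), ← cfc_mul _ _ A (hcont _) (hcont _)]
  refine cfc_le_one _ A fun x _ => ?_
  rcases le_or_gt x 0 with hx | hx
  · simp [Real.sqrt_eq_zero'.mpr hx]
  · rw [mul_comm, ← mul_assoc, ← mul_inv, Real.mul_self_sqrt hx.le, inv_mul_cancel₀ hx.ne']

lemma mul_cfc_inv_sqrt {A : Matrix n n ℂ} (hA : 0 ≤ A) :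
    A * cfc (fun x : ℝ => (√x)⁻¹) A = CFC.sqrt A := by
  have hcont (f : ℝ → ℝ) : ContinuousOn f (spectrum ℝ A) := A.finite_real_spectrum.continuousOn f
  nth_rw 1 [← cfc_id' ℝ A]
  rw [← cfc_mul _ _ A (hcont _) (hcont _), CFC.sqrt_eq_real_sqrt A, cfcₙ_eq_cfc]
  congr with x
  exact Real.div_sqrt

end Matrix

section

variable {n : Type*} [Fintype n] [DecidableEq n]

lemma traceNorm_eq_re_trace_sqrt (X : Matrix n n ℂ) :
    traceNorm X = (CFC.sqrt (X * Xᴴ)).trace.re := by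
  have hA := posSemidef_self_mul_conjTranspose X
  rw [CFC.sqrt_eq_real_sqrt _ hA.nonneg, cfcₙ_eq_cfc, hA.1.cfc_eq, IsHermitian.cfc,
    Unitary.conjStarAlgAut_apply]
  rfl

lemma traceNorm_eq_re_trace_of_mul_self {X S : Matrix n n ℂ} (hS : 0 ≤ S) (h : S * S = X * Xᴴ) :
    traceNorm X = S.trace.re := by
  rw [traceNorm_eq_re_trace_sqrt, CFC.sqrt_unique h hS]

lemma traceNorm_eq_sum_sqrt_eigenvalues (X : Matrix n n ℂ) :
    traceNorm X = ∑ i, √((posSemidef_self_mul_conjTranspose X).1.eigenvalues i) := by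
  rw [traceNorm, trace_mul_cycle, Unitary.coe_star_mul_self, one_mul, trace_diagonal,
    Complex.re_sum]
  simp

lemma traceNorm_sum_of_pairwise {ι : Type*} [Fintype ι] {B : ι → Matrix n n ℂ}
    (h₁ : Pairwise fun j k => B j * (B k)ᴴ = 0) (h₂ : Pairwise fun j k => (B j)ᴴ * B k = 0) :
    traceNorm (∑ k, B k) = ∑ k, traceNorm (B k) := by
  have hA (k : ι) : 0 ≤ B k * (B k)ᴴ := (posSemidef_self_mul_conjTranspose _).nonneg
  have hS : 0 ≤ ∑ k, CFC.sqrt (B k * (B k)ᴴ) := Finset.sum_nonneg fun k _ => CFC.sqrt_nonneg _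
  have hsq : (∑ k, CFC.sqrt (B k * (B k)ᴴ)) * (∑ k, CFC.sqrt (B k * (B k)ᴴ))
      = (∑ k, B k) * (∑ k, B k)ᴴ := by
    rw [conjTranspose_sum, Fintype.sum_mul_sum_of_pairwise, Fintype.sum_mul_sum_of_pairwise h₁]
    · exact Finset.sum_congr rfl fun k _ => CFC.sqrt_mul_sqrt_self _ (hA k)
    · intro j k hjk
      refine sqrt_mul_sqrt_eq_zero (hA j) (hA k) ?_
      simp only [Matrix.mul_assoc, ← Matrix.mul_assoc (B j)ᴴ, h₂ hjk, Matrix.zero_mul,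
        Matrix.mul_zero]
  rw [traceNorm_eq_re_trace_of_mul_self hS hsq, trace_sum, Complex.re_sum]
  exact Finset.sum_congr rfl fun k _ => (traceNorm_eq_re_trace_sqrt (B k)).symm

lemma exists_contraction_re_trace_mul_eq_traceNorm (X : Matrix n n ℂ) :
    ∃ W : Matrix n n ℂ, Wᴴ * W ≤ 1 ∧ (W * X).trace.re = traceNorm X := by
  have hA := posSemidef_self_mul_conjTranspose X
  have hG : (cfc (fun x : ℝ => (√x)⁻¹) (X * Xᴴ))ᴴ = cfc (fun x : ℝ => (√x)⁻¹) (X * Xᴴ) :=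
    IsSelfAdjoint.star_eq (cfc_predicate _ _)
  refine ⟨Xᴴ * cfc (fun x : ℝ => (√x)⁻¹) (X * Xᴴ), ?_, ?_⟩
  · rw [conjTranspose_mul, conjTranspose_conjTranspose, hG, Matrix.mul_assoc,
      ← Matrix.mul_assoc X, ← Matrix.mul_assoc]
    exact cfc_inv_sqrt_mul_mul_cfc_inv_sqrt_le_one hA.1
  · rw [traceNorm_eq_re_trace_sqrt, trace_mul_cycle, mul_cfc_inv_sqrt hA.nonneg]

lemma re_trace_mul_le_traceNorm {W : Matrix n n ℂ} (hW : Wᴴ * W ≤ 1) (X : Matrix n n ℂ) :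
    (W * X).trace.re ≤ traceNorm X := by
  have hA := (posSemidef_self_mul_conjTranspose X).1
  set V : Matrix n n ℂ := (hA.eigenvectorUnitary : Matrix n n ℂ)
  have hV : V * star V = 1 := Unitary.coe_mul_star_self _
  set R := star V * X
  set C := W * V
  have hR (i : n) : ∑ j, ‖R i j‖ ^ 2 = hA.eigenvalues i := by
    have h := hA.conjStarAlgAut_star_eigenvectorUnitary
    rw [Unitary.conjStarAlgAut_apply, Unitary.coe_star, star_star] at h
    have hRR : R * Rᴴ = diagonal (RCLike.ofReal ∘ hA.eigenvalues) := by
      rw [← h]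
      simp only [R, ← star_eq_conjTranspose, star_mul, star_star, Matrix.mul_assoc]
      rfl
    rw [← R.re_mul_conjTranspose_apply_self, hRR]
    simp
  have hC (i : n) : ∑ j, ‖C j i‖ ^ 2 ≤ 1 := by
    have h : 0 ≤ 1 - Cᴴ * C := by
      have := star_left_conjugate_le_conjugate hW V
      rw [Matrix.mul_one, ← star_eq_conjTranspose, Unitary.coe_star_mul_self] at this
      simpa [C, Matrix.mul_assoc, ← star_eq_conjTranspose] using this
    have := (Complex.le_def.mp ((nonneg_iff_posSemidef.mp h).diag_nonneg (i := i))).1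
    simpa [C.re_conjTranspose_mul_apply_self] using this
  calc (W * X).trace.re = (R * C).trace.re := by
        rw [trace_mul_comm R, ← Matrix.mul_one W, ← hV]; simp only [R, C, Matrix.mul_assoc]
    _ ≤ ∑ i, ‖(R * C) i i‖ := by
        rw [trace, Complex.re_sum]
        exact Finset.sum_le_sum fun i _ => Complex.re_le_norm _
    _ ≤ ∑ i, √(hA.eigenvalues i) * 1 := by
        gcongr with i
        refine (R.norm_mul_apply_le C i i).trans ?_
        rw [hR]
        gcongr
        exact Real.sqrt_le_one.mpr (hC i)
    _ = traceNorm X := by simp [traceNorm_eq_sum_sqrt_eigenvalues]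

end

/-- The pinching inequality for the trace norm: for pairwise orthogonal
projections `Π k` with `∑ k, Π k ≤ 1`, the pinched matrix has smaller trace
norm, and its trace norm is the sum of the trace norms of the blocks. -/
theorem traceNorm_pinching {n ι : Type*} [Fintype n] [DecidableEq n]
    [Fintype ι]
    (P : ι → Matrix n n ℂ)
    (hSA : ∀ k, (P k)ᴴ = P k)
    (hIdem : ∀ k, P k * P k = P k)
    (hOrth : ∀ j k, j ≠ k → P j * P k = 0)
    (hLe : (1 - ∑ k, P k).PosSemidef)
    (X : Matrix n n ℂ) :
    traceNorm (∑ k, P k * X * P k) ≤ traceNorm X ∧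
    traceNorm (∑ k, P k * X * P k) = ∑ k, traceNorm (P k * X * P k) := by
  have hadj (k : ι) (Y : Matrix n n ℂ) : (P k * Y * P k)ᴴ = P k * Yᴴ * P k := by
    rw [conjTranspose_mul, conjTranspose_mul, hSA, Matrix.mul_assoc]
  have hcross {j k : ι} (hjk : j ≠ k) (A B : Matrix n n ℂ) : P j * A * P j * (P k * B * P k) = 0 :=
    conj_mul_conj_eq_zero_of_mul_eq_zero (hOrth j k hjk) A B
  refine ⟨?_, traceNorm_sum_of_pairwise (fun j k hjk => ?_) (fun j k hjk => ?_)⟩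
  · obtain ⟨W, hW, hWtr⟩ := exists_contraction_re_trace_mul_eq_traceNorm (∑ k, P k * X * P k)
    rw [← hWtr, trace_mul_sum_conj]
    exact re_trace_mul_le_traceNorm
      (star_mul_self_sum_conj_le_one (fun k => ⟨hIdem k, hSA k⟩) hOrth hLe hW) X
  all_goals simp only [hadj, hcross hjk]
end

section
/- Let φ = (1+√5)/2 and define E(p) = ln( (1/φ)·( |p + (1−p)·e^{i3π/5}| + |pφ − (1−p)·e^{i3π/5}| ) ) for p ∈ [0,1]. Then E(1) = ln φ, E(0) = ln(2/φ), and E(p) = 0 if and only if p = 1/φ² (equivalently p = d_I/(d_τ²) with d_τ = φ). -/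
/-!
Write `u p, v p` for the two moduli. Since `cos (3π/5) = (1 - φ)/2`, the law of cosines makes
`u²` and `v²` quadratics in `p` with `v² - u² = pφ`. Hence `u + v = φ` forces `v = (φ + p)/2`, and
substituting back into `v²` leaves `(4φ + 3)(p - 1/φ²)² = 0`: the value `1/φ²` is a double root,
which is why `E` vanishes exactly once.
-/

open Real Complex

lemma norm_ofReal_add_mul_exp_mul_I_sq (a b θ : ℝ) :
    ‖(a : ℂ) + b * exp (θ * I)‖ ^ 2 = a ^ 2 + b ^ 2 + 2 * a * b * Real.cos θ := by
  rw [exp_mul_I, ← ofReal_cos, ← ofReal_sin, Complex.sq_norm,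
    show (a : ℂ) + b * (Real.cos θ + Real.sin θ * I) =
      ↑(a + b * Real.cos θ) + ↑(b * Real.sin θ) * I by push_cast; ring, normSq_add_mul_I]
  linear_combination b ^ 2 * Real.sin_sq_add_cos_sq θ

lemma cos_three_pi_div_five : Real.cos (3 * π / 5) = (1 - goldenRatio) / 2 := by
  rw [show 3 * π / 5 = π - 2 * (π / 5) by ring, Real.cos_pi_sub, Real.cos_two_mul,
    Real.cos_pi_div_five]
  linear_combination (-1 / 8 : ℝ) * Real.sq_sqrt (show (0 : ℝ) ≤ 5 by norm_num)

lemma norm_dimer_vacuum_sq (p : ℝ) :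
    ‖(p : ℂ) + ((1 - p : ℝ) : ℂ) * exp (3 * π / 5 * I)‖ ^ 2 =
      p ^ 2 + (1 - p) ^ 2 + p * (1 - p) * (1 - goldenRatio) := by
  rw [show (3 * π / 5 : ℂ) = ((3 * π / 5 : ℝ) : ℂ) by push_cast; ring,
    norm_ofReal_add_mul_exp_mul_I_sq, cos_three_pi_div_five]
  ring

lemma norm_dimer_tau_sq (p : ℝ) :
    ‖(p : ℂ) * goldenRatio - ((1 - p : ℝ) : ℂ) * exp (3 * π / 5 * I)‖ ^ 2 =
      (p * goldenRatio) ^ 2 + (1 - p) ^ 2 + p * (1 - p) := by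
  rw [show (p : ℂ) * goldenRatio - ((1 - p : ℝ) : ℂ) * exp (3 * π / 5 * I) =
      ((p * goldenRatio : ℝ) : ℂ) + ((p - 1 : ℝ) : ℂ) * exp ((3 * π / 5 : ℝ) * I) by
        push_cast; ring,
    norm_ofReal_add_mul_exp_mul_I_sq, cos_three_pi_div_five]
  linear_combination p * (1 - p) * goldenRatio_sq

lemma add_eq_iff_of_sq_eq_add_one {φ p u v : ℝ} (hφ : φ ^ 2 = φ + 1) (hφ1 : 1 < φ)
    (hu : 0 ≤ u) (hv : 0 ≤ v)
    (hu2 : u ^ 2 = p ^ 2 + (1 - p) ^ 2 + p * (1 - p) * (1 - φ))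
    (hv2 : v ^ 2 = (p * φ) ^ 2 + (1 - p) ^ 2 + p * (1 - p)) :
    u + v = φ ↔ p = 1 / φ ^ 2 := by
  rw [show 1 / φ ^ 2 = 2 - φ by field_simp; linear_combination (φ - 1) * hφ]
  constructor
  · intro h
    have hv' : v = (φ + p) / 2 := by
      have hlin : φ * (2 * v - φ - p) = 0 := by
        rw [show u = φ - v by linarith] at hu2
        linear_combination hv2 - hu2 + p ^ 2 * hφ
      linarith [(mul_eq_zero.1 hlin).resolve_left (by positivity)]
    have hdouble : (4 * φ + 3) * (p - (2 - φ)) ^ 2 = 0 := by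
      rw [hv'] at hv2
      linear_combination (-4) * hv2 + (8 * p + 4 * φ - 4 * p ^ 2 - 8) * hφ
    have hsq := (mul_eq_zero.1 hdouble).resolve_left (by linarith)
    linarith [pow_eq_zero_iff (n := 2) two_ne_zero |>.1 hsq]
  · rintro rfl
    have hu1 : u = φ - 1 := by
      refine (pow_left_inj₀ hu (by linarith) two_ne_zero).1 ?_
      linear_combination hu2 + (φ - 2) * hφ
    have hv1 : v = 1 := by
      refine (pow_left_inj₀ hv zero_le_one two_ne_zero).1 ?_
      linear_combination hv2 + (φ ^ 2 - 3 * φ + 2) * hφ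
    linarith

lemma norm_dimer_tau_pos (p : ℝ) :
    0 < ‖(p : ℂ) * goldenRatio - ((1 - p : ℝ) : ℂ) * exp (3 * π / 5 * I)‖ := by
  have hsq := norm_dimer_tau_sq p
  refine (norm_nonneg _).lt_of_ne fun h => ?_
  rw [← h] at hsq
  nlinarith [goldenRatio_sq, mul_nonneg (sq_nonneg p) goldenRatio_pos.le, sq_nonneg (p - 1 / 2)]

lemma log_one_div_mul_eq_zero_iff {a x : ℝ} (ha : 0 < a) (hx : 0 < x) :
    Real.log (1 / a * x) = 0 ↔ x = a := by
  rw [one_div_mul_eq_div, ← div_eq_one_iff_eq ha.ne']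
  exact ⟨eq_one_of_pos_of_log_eq_zero (div_pos hx ha), fun h => h ▸ Real.log_one⟩

/-- Anyonic logarithmic negativity of the Fibonacci dimer: with
`φ = (1+√5)/2` and
`E(p) = ln((1/φ)(|p + (1−p)e^{i3π/5}| + |pφ − (1−p)e^{i3π/5}|))`,
we have `E(1) = ln φ`, `E(0) = ln(2/φ)`, and for `p ∈ [0,1]`,
`E(p) = 0` iff `p = 1/φ²`. -/
theorem fibonacci_dimer_negativity
    (φ : ℝ) (hφ : φ = (1 + Real.sqrt 5) / 2)
    (E : ℝ → ℝ)
    (hE : ∀ p, E p = Real.log ((1 / φ) *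
      (‖((p : ℂ) + ((1 - p : ℝ) : ℂ) * Complex.exp ((3 * π / 5) * Complex.I))‖ +
       ‖((p : ℂ) * (φ : ℂ) - ((1 - p : ℝ) : ℂ) * Complex.exp ((3 * π / 5) * Complex.I))‖))) :
    E 1 = Real.log φ ∧ E 0 = Real.log (2 / φ) ∧
    (∀ p, 0 ≤ p → p ≤ 1 → (E p = 0 ↔ p = 1 / φ ^ 2)) := by
  obtain rfl : φ = goldenRatio := hφ
  refine ⟨?_, ?_, fun p _ _ => ?_⟩
  · rw [hE]
    simp only [sub_self, ofReal_zero, ofReal_one, zero_mul, add_zero, one_mul, sub_zero, norm_one,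
      Complex.norm_real, Real.norm_of_nonneg goldenRatio_pos.le]
    rw [add_comm, ← goldenRatio_sq, one_div_mul_eq_div, pow_two,
      mul_div_cancel_left₀ _ goldenRatio_ne_zero]
  · rw [hE]
    simp only [sub_zero, ofReal_zero, ofReal_one, zero_mul, zero_add, one_mul, zero_sub, norm_neg]
    rw [show (3 * π / 5 : ℂ) = ((3 * π / 5 : ℝ) : ℂ) by push_cast; ring, norm_exp_ofReal_mul_I]
    ring_nf
  · rw [hE, log_one_div_mul_eq_zero_iff goldenRatio_pos
      (add_pos_of_nonneg_of_pos (norm_nonneg _) (norm_dimer_tau_pos p))]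
    exact add_eq_iff_of_sq_eq_add_one goldenRatio_sq one_lt_goldenRatio (norm_nonneg _)
      (norm_nonneg _) (norm_dimer_vacuum_sq p) (norm_dimer_tau_sq p)
end

section
/- For the su(2)₄ spin-1 dimer, define E(p₀,p₁) = ln( (1/2)·Σ_{s=±1} |p₀ − p₂ + s·e^{−iπ/3}·p₁| + |p₀ + p₂| ) where p₂ = 1 − p₀ − p₁ and p₀,p₁,p₂ ≥ 0. Then E(p₀,p₁) = 0 if and only if p₀ = p₂ (equivalently p₁ = 1 − 2p₀), and E ≥ 0 throughout the simplex. -/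
open Real Complex

/-!
Write `a = p₀ - p₂`, `b = p₁` and `z = e^{-iπ/3} b`, so that `|p₀ + p₂| = 1 - b` and `‖z‖ = b`.
The argument of the logarithm is then `1 + ((‖a + z‖ + ‖a - z‖) / 2 - ‖z‖)`, and the bracket is
nonnegative by the triangle inequality for `(a + z) - (a - z) = 2z`. It vanishes exactly when `a`
lies on the segment from `-z` to `z`; since `e^{-iπ/3}` is not real, that segment meets the real
axis only at `0`.
-/

section NormedSpace

variable {V : Type*} [NormedAddCommGroup V] [NormedSpace ℝ V]

theorem two_mul_norm_le_norm_add_add_norm_sub (x z : V) : 2 * ‖z‖ ≤ ‖x + z‖ + ‖x - z‖ :=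
  calc 2 * ‖z‖ = ‖(x + z) - (x - z)‖ := by
        rw [add_sub_sub_cancel, ← two_smul ℝ, norm_smul, Real.norm_two]
    _ ≤ ‖x + z‖ + ‖x - z‖ := norm_sub_le _ _

theorem norm_add_add_norm_sub_eq_two_mul_iff [StrictConvexSpace ℝ V] (x z : V) :
    ‖x + z‖ + ‖x - z‖ = 2 * ‖z‖ ↔ Wbtw ℝ (-z) x z := by
  have hxz : ‖-z - x‖ = ‖x + z‖ := by rw [← norm_neg, neg_sub, sub_neg_eq_add]
  have hzz : ‖-z - z‖ = 2 * ‖z‖ := by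
    rw [← norm_neg, neg_sub, sub_neg_eq_add, ← two_smul ℝ, norm_smul, Real.norm_two]
  rw [← dist_add_dist_eq_iff, dist_eq_norm, dist_eq_norm, dist_eq_norm, hxz, hzz]

end NormedSpace

theorem Complex.ofReal_eq_zero_of_wbtw_neg_mul {ω : ℂ} (hω : ω.im ≠ 0) {a c : ℝ}
    (h : Wbtw ℝ (-(ω * c)) (a : ℂ) (ω * c)) : a = 0 := by
  obtain ⟨t, -, ht⟩ := h
  rw [AffineMap.lineMap_apply_module'] at ht
  have him := congrArg Complex.im ht
  have hre := congrArg Complex.re ht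
  simp only [sub_neg_eq_add, smul_add, real_smul, add_im, mul_im, ofReal_re, ofReal_im, mul_zero,
    zero_add, mul_re, sub_zero, zero_mul, add_zero, neg_im, add_re, neg_re] at him hre
  have hs : (2 * t - 1) * c = 0 :=
    (mul_eq_zero.mp (by linear_combination him : (2 * t - 1) * c * ω.im = 0)).resolve_right hω
  linear_combination -hre + ω.re * hs

theorem Complex.norm_ofReal_add_add_norm_ofReal_sub_eq_two_mul_iff {ω : ℂ} (hω : ω.im ≠ 0)
    (a c : ℝ) : ‖(a : ℂ) + ω * c‖ + ‖(a : ℂ) - ω * c‖ = 2 * ‖ω * c‖ ↔ a = 0 := by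
  rw [norm_add_add_norm_sub_eq_two_mul_iff]
  refine ⟨Complex.ofReal_eq_zero_of_wbtw_neg_mul hω, ?_⟩
  rintro rfl
  simpa using wbtw_midpoint ℝ (-(ω * c)) (ω * c)

theorem Real.log_one_add_eq_zero_iff {x : ℝ} (hx : 0 ≤ x) : log (1 + x) = 0 ↔ x = 0 := by
  rw [Real.log_eq_zero]
  constructor
  · rintro (h | h | h) <;> linarith
  · intro h
    simp [h]

theorem norm_exp_neg_pi_div_three_mul_I : ‖exp (-(π / 3) * I)‖ = 1 := by
  simpa using norm_exp_ofReal_mul_I (-(π / 3))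

theorem exp_neg_pi_div_three_mul_I_im : (exp (-(π / 3) * I)).im = -(√3 / 2) := by
  rw [exp_im]
  simp

/-- Anyonic logarithmic negativity of the su(2)₄ spin-1 dimer:
`E(p₀,p₁) = ln((1/2)·∑_{s=±1}|p₀−p₂+s·e^{−iπ/3}p₁| + |p₀+p₂|)` with
`p₂ = 1−p₀−p₁`; it is nonnegative on the simplex and vanishes iff `p₀ = p₂`. -/
theorem su2_4_spin1_dimer_negativity
    (E : ℝ → ℝ → ℝ)
    (hE : ∀ p₀ p₁, E p₀ p₁ = Real.log ((1 / 2) *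
      (‖((p₀ - (1 - p₀ - p₁) : ℝ) : ℂ) +
          Complex.exp (-(π / 3) * Complex.I) * (p₁ : ℂ)‖ +
       ‖((p₀ - (1 - p₀ - p₁) : ℝ) : ℂ) -
          Complex.exp (-(π / 3) * Complex.I) * (p₁ : ℂ)‖) +
      |p₀ + (1 - p₀ - p₁)|)) :
    ∀ p₀ p₁, 0 ≤ p₀ → 0 ≤ p₁ → 0 ≤ 1 - p₀ - p₁ →
      0 ≤ E p₀ p₁ ∧ (E p₀ p₁ = 0 ↔ p₀ = 1 - p₀ - p₁) := by
  intro p₀ p₁ h₀ h₁ h₂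
  set ω := exp (-(π / 3) * I)
  set a := p₀ - (1 - p₀ - p₁)
  have hz : ‖ω * p₁‖ = p₁ := by
    rw [norm_mul, norm_exp_neg_pi_div_three_mul_I, one_mul, norm_real, Real.norm_of_nonneg h₁]
  have hE' :
      E p₀ p₁ = Real.log (1 + ((‖(a : ℂ) + ω * p₁‖ + ‖(a : ℂ) - ω * p₁‖) / 2 - ‖ω * p₁‖)) := by
    rw [hE, hz, abs_of_nonneg (by linarith)]
    congr 1
    ring
  have hgap : 0 ≤ (‖(a : ℂ) + ω * p₁‖ + ‖(a : ℂ) - ω * p₁‖) / 2 - ‖ω * p₁‖ := by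
    linarith [two_mul_norm_le_norm_add_add_norm_sub (a : ℂ) (ω * p₁)]
  have hω : ω.im ≠ 0 := by
    rw [exp_neg_pi_div_three_mul_I_im]
    norm_num
  refine ⟨hE' ▸ Real.log_nonneg (by linarith), ?_⟩
  rw [hE', Real.log_one_add_eq_zero_iff hgap, sub_eq_zero, div_eq_iff two_ne_zero,
    mul_comm ‖ω * (p₁ : ℂ)‖, norm_ofReal_add_add_norm_ofReal_sub_eq_two_mul_iff hω, sub_eq_zero]
end
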